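/- arXiv:1103.3995 — 2 statements merged into one kernel-verified Lean document; each statement's English description precedes it below -/
import Mathlib

section
/- Let a, b, c and (l_ij), (m_ij) and F be as in the generalized Monge–Ampère setup. There exists a constant C > 0, depending only on F, a, b, c, (l_ij), (m_ij), such that for every t ∈ [0,1] and every twice continuously differentiable biperiodic function p satisfying the deformed equation (GMA_t) and the deformed ellipticity condition (E_t), one has |p_x| ≤ C and |p_y| ≤ C everywhere on ℝ², and moreover |p(x,y) − ∫_{𝕋²} p| ≤ C for all (x,y) ∈ ℝ². -/
/-!
On a horizontal line, `u = p_x` is `1`-periodic and vanishes somewhere (Rolle, as `p` is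
periodic), and the first diagonal entry of the ellipticity condition gives
`u' ≥ t l₁₁ u - (a - t m₁₁ p_y)`. With the integrating factor `e^{-s x}`, a periodic function
with a zero and `u' ≥ s u - K` is bounded by `K e^{2|s|}`. Since `m₁₁ l₂₂ = 0` the system is
triangular: if `m₁₁ = 0` this bounds `p_x` outright, and the bound then feeds into the same
argument for `p_y` on vertical lines, using the second diagonal entry (symmetrically if
`l₂₂ = 0`). The oscillation bound follows by the mean value inequality on the unit square,
to which every point reduces by periodicity.
-/

open MeasureTheory

/-- Partial derivative in the first variable. -/
noncomputable def pdx (p : ℝ × ℝ → ℝ) (z : ℝ × ℝ) : ℝ := fderiv ℝ p z (1, 0)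

/-- Partial derivative in the second variable. -/
noncomputable def pdy (p : ℝ × ℝ → ℝ) (z : ℝ × ℝ) : ℝ := fderiv ℝ p z (0, 1)

/-- A function `ℝ² → ℝ` is biperiodic if it has period 1 in each variable. -/
def Biperiodic (p : ℝ × ℝ → ℝ) : Prop :=
  ∀ x y : ℝ, p (x + 1, y) = p (x, y) ∧ p (x, y + 1) = p (x, y)

/-- The integral over the torus `𝕋² = ℝ²/ℤ²` of (the descent of) a biperiodic function. -/
noncomputable def torusInt (f : ℝ × ℝ → ℝ) : ℝ := ∫ x in (0:ℝ)..1, ∫ y in (0:ℝ)..1, f (x, y)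

open Function Set Real

lemma abs_mul_sub_le_of_mem_Icc {s x x₀ : ℝ} (hx : x ∈ Icc (x₀ - 1) (x₀ + 1)) :
    |s * (x - x₀)| ≤ |s| := by
  rw [abs_mul]
  exact mul_le_of_le_one_right (abs_nonneg s)
    (abs_le.2 ⟨by linarith [hx.1], by linarith [hx.2]⟩)

lemma neg_le_of_sub_le_hasDerivAt_of_mem_Icc {ψ ψ' : ℝ → ℝ} {s K x₀ : ℝ} (hK : 0 ≤ K)
    (hψ : ∀ x, HasDerivAt ψ (ψ' x) x) (h0 : ψ x₀ = 0) (h : ∀ x, s * ψ x - K ≤ ψ' x)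
    {y : ℝ} (hy : y ∈ Icc x₀ (x₀ + 1)) : -(K * exp (2 * |s|)) ≤ ψ y := by
  set φ : ℝ → ℝ := fun x => exp (-s * (x - x₀)) * ψ x with hφ_def
  have hφ : ∀ x, HasDerivAt φ (exp (-s * (x - x₀)) * (ψ' x - s * ψ x)) x := fun x => by
    have hlin : HasDerivAt (fun x => -s * (x - x₀)) (-s) x := by
      simpa using ((hasDerivAt_id x).sub_const x₀).const_mul (-s)
    exact (hlin.exp.fun_mul (hψ x)).congr_deriv (by ring)
  have hIcc : Icc x₀ (x₀ + 1) ⊆ Icc (x₀ - 1) (x₀ + 1) := Icc_subset_Icc_left (by linarith)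
  have hderiv : ∀ x ∈ interior (Icc x₀ (x₀ + 1)), -(K * exp |s|) ≤ deriv φ x := by
    intro x hx
    have hx' := hIcc (interior_subset hx)
    have hexp : exp (-s * (x - x₀)) ≤ exp |s| :=
      exp_le_exp.2 ((neg_mul s _ ▸ neg_le_abs _).trans (abs_mul_sub_le_of_mem_Icc hx'))
    rw [(hφ x).deriv]
    nlinarith [h x, exp_pos (-s * (x - x₀)), mul_le_mul_of_nonneg_left hexp hK]
  have hmvt := (convex_Icc x₀ (x₀ + 1)).mul_sub_le_image_sub_of_le_deriv
    (fun x _ => (hφ x).continuousAt.continuousWithinAt)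
    (fun x _ => (hφ x).differentiableAt.differentiableWithinAt) hderiv
    x₀ (left_mem_Icc.2 (by linarith)) y hy hy.1
  have hφy : -(K * exp |s|) ≤ φ y := by
    simp only [hφ_def, h0, mul_zero, sub_zero] at hmvt
    nlinarith [hy.2, mul_nonneg hK (exp_pos |s|).le]
  have hψy : ψ y = exp (s * (y - x₀)) * φ y := by
    rw [hφ_def, ← mul_assoc, ← exp_add, show s * (y - x₀) + -s * (y - x₀) = 0 by ring,
      exp_zero, one_mul]
  have hexp : exp (s * (y - x₀)) ≤ exp |s| :=
    exp_le_exp.2 ((le_abs_self _).trans (abs_mul_sub_le_of_mem_Icc (hIcc hy)))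
  calc -(K * exp (2 * |s|)) = exp |s| * -(K * exp |s|) := by
        rw [two_mul, exp_add]; ring
    _ ≤ exp (s * (y - x₀)) * -(K * exp |s|) :=
        mul_le_mul_of_nonpos_right hexp (by nlinarith [exp_pos |s|])
    _ ≤ ψ y := hψy ▸ mul_le_mul_of_nonneg_left hφy (exp_pos _).le

lemma Function.Periodic.neg_le_of_sub_le_hasDerivAt {ψ ψ' : ℝ → ℝ} {s K x₀ : ℝ} (hK : 0 ≤ K)
    (hper : Periodic ψ 1) (hψ : ∀ x, HasDerivAt ψ (ψ' x) x) (h0 : ψ x₀ = 0)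
    (h : ∀ x, s * ψ x - K ≤ ψ' x) (x : ℝ) : -(K * exp (2 * |s|)) ≤ ψ x := by
  obtain ⟨y, hy, hxy⟩ := hper.exists_mem_Ico one_pos x x₀
  exact hxy ▸ neg_le_of_sub_le_hasDerivAt_of_mem_Icc hK hψ h0 h (Ico_subset_Icc_self hy)

/-- The upper bound is the lower bound for the reflection `x ↦ -ψ (2 x₀ - x)`. -/
lemma Function.Periodic.abs_le_of_sub_le_hasDerivAt {ψ ψ' : ℝ → ℝ} {s K x₀ : ℝ} (hK : 0 ≤ K)
    (hper : Periodic ψ 1) (hψ : ∀ x, HasDerivAt ψ (ψ' x) x) (h0 : ψ x₀ = 0)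
    (h : ∀ x, s * ψ x - K ≤ ψ' x) (x : ℝ) : |ψ x| ≤ K * exp (2 * |s|) := by
  have hrefl_per : Periodic (fun x => -ψ (2 * x₀ - x)) 1 := fun x => by
    simp only [sub_add_eq_sub_sub, hper.sub_eq]
  have hrefl : ∀ x, HasDerivAt (fun x => -ψ (2 * x₀ - x)) (ψ' (2 * x₀ - x)) x := fun x => by
    simpa only [neg_neg] using ((hψ (2 * x₀ - x)).comp_const_sub (2 * x₀) x).fun_neg
  have hupper := hrefl_per.neg_le_of_sub_le_hasDerivAt (s := -s) (x₀ := x₀) hK hrefl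
    (by simp [two_mul, h0]) (fun x => by simpa using h (2 * x₀ - x)) (2 * x₀ - x)
  rw [abs_neg, sub_sub_cancel] at hupper
  exact abs_le.2 ⟨hper.neg_le_of_sub_le_hasDerivAt hK hψ h0 h x, by linarith⟩

lemma Function.Periodic.abs_deriv_le_of_sub_le {u u' u'' : ℝ → ℝ} {s K : ℝ}
    (hK : 0 ≤ K) (hper : Periodic u 1) (hu : ∀ x, HasDerivAt u (u' x) x)
    (hu' : ∀ x, HasDerivAt u' (u'' x) x) (h : ∀ x, s * u' x - K ≤ u'' x) (x : ℝ) :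
    |u' x| ≤ K * exp (2 * |s|) := by
  have hper' : Periodic u' 1 := fun x => by
    have hshift := (hu (x + 1)).comp_add_const x 1
    rw [show (fun x => u (x + 1)) = u from funext hper] at hshift
    exact hshift.unique (hu x)
  obtain ⟨x₀, -, hx₀⟩ := exists_hasDerivAt_eq_zero one_pos
    (fun x _ => (hu x).continuousAt.continuousWithinAt) (by simpa using (hper 0).symm)
    (fun x _ => hu x)
  exact hper'.abs_le_of_sub_le_hasDerivAt hK hu' hx₀ h x

lemma hasDerivAt_pdx {p : ℝ × ℝ → ℝ} {x y : ℝ} (hp : DifferentiableAt ℝ p (x, y)) :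
    HasDerivAt (fun t => p (t, y)) (pdx p (x, y)) x :=
  hp.hasFDerivAt.comp_hasDerivAt x ((hasDerivAt_id x).prodMk (hasDerivAt_const x y))

lemma hasDerivAt_pdy {p : ℝ × ℝ → ℝ} {x y : ℝ} (hp : DifferentiableAt ℝ p (x, y)) :
    HasDerivAt (fun t => p (x, t)) (pdy p (x, y)) y :=
  hp.hasFDerivAt.comp_hasDerivAt y ((hasDerivAt_const y x).prodMk (hasDerivAt_id y))

lemma differentiable_pdx {p : ℝ × ℝ → ℝ} (hp : ContDiff ℝ 2 p) : Differentiable ℝ (pdx p) :=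
  ((hp.fderiv_right (m := 1) (by norm_num)).clm_apply contDiff_const).differentiable
    one_ne_zero

lemma differentiable_pdy {p : ℝ × ℝ → ℝ} (hp : ContDiff ℝ 2 p) : Differentiable ℝ (pdy p) :=
  ((hp.fderiv_right (m := 1) (by norm_num)).clm_apply contDiff_const).differentiable
    one_ne_zero

lemma Biperiodic.abs_pdx_le_of_diag_pos {p : ℝ × ℝ → ℝ} (hper : Biperiodic p)
    (hp : ContDiff ℝ 2 p) {a l m M : ℝ}
    (hM : 0 ≤ a + M) (hmix : ∀ z, |m * pdy p z| ≤ M)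
    (hell : ∀ z, 0 < a + pdx (pdx p) z - l * pdx p z - m * pdy p z) (z : ℝ × ℝ) :
    |pdx p z| ≤ (a + M) * exp (2 * |l|) :=
  Periodic.abs_deriv_le_of_sub_le (u := fun t => p (t, z.2)) hM
    (fun x => (hper x z.2).1)
    (fun x => hasDerivAt_pdx (hp.differentiable (by norm_num) _))
    (fun x => hasDerivAt_pdx (differentiable_pdx hp _))
    (fun x => by linarith [hell (x, z.2), neg_abs_le (m * pdy p (x, z.2)), hmix (x, z.2)])
    z.1

lemma Biperiodic.abs_pdy_le_of_diag_pos {p : ℝ × ℝ → ℝ} (hper : Biperiodic p)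
    (hp : ContDiff ℝ 2 p) {b l m M : ℝ}
    (hM : 0 ≤ b + M) (hmix : ∀ z, |m * pdx p z| ≤ M)
    (hell : ∀ z, 0 < b + pdy (pdy p) z - m * pdx p z - l * pdy p z) (z : ℝ × ℝ) :
    |pdy p z| ≤ (b + M) * exp (2 * |l|) :=
  Periodic.abs_deriv_le_of_sub_le (u := fun t => p (z.1, t)) hM
    (fun y => (hper z.1 y).2)
    (fun y => hasDerivAt_pdy (hp.differentiable (by norm_num) _))
    (fun y => hasDerivAt_pdy (differentiable_pdy hp _))
    (fun y => by linarith [hell (z.1, y), neg_abs_le (m * pdx p (z.1, y)), hmix (z.1, y)])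
    z.2

/-- `(a + b) e^{2S}` bounds the derivative controlled first, and `(a + b + S (a + b) e^{2S}) e^{2S}`
the other one. -/
noncomputable def gradientBound (a b S : ℝ) : ℝ :=
  (a + b) * (1 + S * exp (2 * S)) * exp (2 * S)

lemma gradientBound_pos {a b S : ℝ} (ha : 0 < a) (hb : 0 < b) (hS : 0 ≤ S) :
    0 < gradientBound a b S := by
  unfold gradientBound; positivity

lemma Biperiodic.abs_pdx_le_and_abs_pdy_le {p : ℝ × ℝ → ℝ} (hper : Biperiodic p)
    (hp : ContDiff ℝ 2 p) {a b t l11 l22 m11 m22 : ℝ} (ha : 0 < a) (hb : 0 < b) (ht : |t| ≤ 1)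
    (hml : m11 * l22 = 0)
    (h11 : ∀ z, 0 < a + pdx (pdx p) z - t * l11 * pdx p z - t * m11 * pdy p z)
    (h22 : ∀ z, 0 < b + pdy (pdy p) z - t * l22 * pdx p z - t * m22 * pdy p z) (z : ℝ × ℝ) :
    |pdx p z| ≤ gradientBound a b (|l11| + |l22| + |m11| + |m22|) ∧
      |pdy p z| ≤ gradientBound a b (|l11| + |l22| + |m11| + |m22|) := by
  set S := |l11| + |l22| + |m11| + |m22|
  obtain ⟨hl11, hl22, hm11, hm22⟩ : |l11| ≤ S ∧ |l22| ≤ S ∧ |m11| ≤ S ∧ |m22| ≤ S := by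
    refine ⟨?_, ?_, ?_, ?_⟩ <;>
      linarith [abs_nonneg l11, abs_nonneg l22, abs_nonneg m11, abs_nonneg m22]
  have hS : 0 ≤ S := (abs_nonneg _).trans hl11
  set B := (a + b) * exp (2 * S)
  have hB : 0 ≤ B := by positivity
  have habs_tu : ∀ u, |t * u| ≤ |u| := fun u => by
    rw [abs_mul]; exact mul_le_of_le_one_left (abs_nonneg u) ht
  have hmix : ∀ {u w : ℝ}, |w| ≤ B → |t * u * w| ≤ |u| * B := fun hw => by
    rw [abs_mul]; exact mul_le_mul (habs_tu _) hw (abs_nonneg _) (abs_nonneg _)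
  have hexp : ∀ {u}, |u| ≤ S → exp (2 * |t * u|) ≤ exp (2 * S) := fun {u} hu =>
    exp_le_exp.2 (by linarith [habs_tu u])
  have hfirst : ∀ {c u}, c ≤ a + b → |u| ≤ S → (c + 0) * exp (2 * |t * u|) ≤ B :=
    fun hc hu => by rw [add_zero]; exact mul_le_mul hc (hexp hu) (exp_pos _).le (by linarith)
  have hsecond : ∀ {c u v}, c ≤ a + b → |u| ≤ S → |v| ≤ S →
      (c + |u| * B) * exp (2 * |t * v|) ≤ gradientBound a b S := fun hc hu hv => by
    have hG : gradientBound a b S = (a + b + S * B) * exp (2 * S) := by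
      unfold gradientBound; ring
    rw [hG]
    exact mul_le_mul (by nlinarith) (hexp hv) (exp_pos _).le (by positivity)
  have hBG : B ≤ gradientBound a b S := by
    rw [show gradientBound a b S = B * (1 + S * exp (2 * S)) by unfold gradientBound; ring]
    exact le_mul_of_one_le_right hB (le_add_of_nonneg_right (by positivity))
  rcases mul_eq_zero.1 hml with hm | hl
  · have hx : ∀ z, |pdx p z| ≤ B := fun z =>
      (hper.abs_pdx_le_of_diag_pos hp (by linarith) (fun z => by simp [hm]) h11 z).trans
        (hfirst (by linarith) hl11)
    refine ⟨(hx z).trans hBG, ?_⟩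
    exact (hper.abs_pdy_le_of_diag_pos hp (by positivity) (fun z => hmix (hx z)) h22 z).trans
      (hsecond (by linarith) hl22 hm22)
  · have hy : ∀ z, |pdy p z| ≤ B := fun z =>
      (hper.abs_pdy_le_of_diag_pos hp (by linarith) (fun z => by simp [hl]) h22 z).trans
        (hfirst (by linarith) hm22)
    refine ⟨?_, (hy z).trans hBG⟩
    exact (hper.abs_pdx_le_of_diag_pos hp (by positivity) (fun z => hmix (hy z)) h11 z).trans
      (hsecond (by linarith) hm11 hl11)

lemma norm_fderiv_le_abs_pdx_add_abs_pdy (p : ℝ × ℝ → ℝ) (z : ℝ × ℝ) :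
    ‖fderiv ℝ p z‖ ≤ |pdx p z| + |pdy p z| := by
  refine ContinuousLinearMap.opNorm_le_bound _ (by positivity) fun v => ?_
  have hv : fderiv ℝ p z v = v.1 * pdx p z + v.2 * pdy p z := by
    conv_lhs =>
      rw [show v = v.1 • ((1 : ℝ), (0 : ℝ)) + v.2 • ((0 : ℝ), (1 : ℝ)) by ext <;> simp]
    rw [map_add, map_smul, map_smul, smul_eq_mul, smul_eq_mul, pdx, pdy]
  have h1 : |v.1| ≤ ‖v‖ := norm_fst_le v
  have h2 : |v.2| ≤ ‖v‖ := norm_snd_le v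
  rw [hv, Real.norm_eq_abs]
  calc |v.1 * pdx p z + v.2 * pdy p z| ≤ |v.1| * |pdx p z| + |v.2| * |pdy p z| := by
        rw [← abs_mul, ← abs_mul]; exact abs_add_le _ _
    _ ≤ ‖v‖ * |pdx p z| + ‖v‖ * |pdy p z| := by gcongr
    _ = (|pdx p z| + |pdy p z|) * ‖v‖ := by ring

lemma abs_sub_intervalIntegral_le {f : ℝ → ℝ} {c L : ℝ}
    (hf : IntervalIntegrable f volume 0 1)
    (h : ∀ x ∈ Icc (0 : ℝ) 1, |c - f x| ≤ L) : |c - ∫ x in (0 : ℝ)..1, f x| ≤ L := by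
  have hsub : c - ∫ x in (0 : ℝ)..1, f x = ∫ x in (0 : ℝ)..1, (c - f x) := by
    simp [intervalIntegral.integral_sub intervalIntegrable_const hf]
  simpa [hsub] using intervalIntegral.norm_integral_le_of_norm_le_const (a := 0) (b := 1)
    (f := fun x => c - f x) fun x hx => h x (Ioc_subset_Icc_self (by simpa using hx))

lemma abs_sub_torusInt_le {p : ℝ × ℝ → ℝ} (hp : Continuous p) {c L : ℝ}
    (h : ∀ u ∈ Icc (0 : ℝ) 1, ∀ v ∈ Icc (0 : ℝ) 1, |c - p (u, v)| ≤ L) :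
    |c - torusInt p| ≤ L := by
  have hinner : Continuous fun u => ∫ v in (0 : ℝ)..1, p (u, v) :=
    intervalIntegral.continuous_parametric_intervalIntegral_of_continuous'
      (f := fun u v => p (u, v)) hp 0 1
  exact abs_sub_intervalIntegral_le (hinner.intervalIntegrable 0 1) fun u hu =>
    abs_sub_intervalIntegral_le
      ((hp.comp (continuous_const.prodMk continuous_id)).intervalIntegrable 0 1) (h u hu)

lemma Biperiodic.exists_mem_Ico_eq {p : ℝ × ℝ → ℝ} (hper : Biperiodic p) (z : ℝ × ℝ) :
    ∃ u ∈ Ico (0 : ℝ) 1, ∃ v ∈ Ico (0 : ℝ) 1, p z = p (u, v) := by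
  obtain ⟨u, hu, hzu⟩ := Periodic.exists_mem_Ico₀ (f := fun x => p (x, z.2))
    (fun x => (hper x z.2).1) one_pos z.1
  obtain ⟨v, hv, huv⟩ := Periodic.exists_mem_Ico₀ (f := fun y => p (u, y))
    (fun y => (hper u y).2) one_pos z.2
  exact ⟨u, hu, v, hv, hzu.trans huv⟩

lemma Biperiodic.abs_sub_torusInt_le {p : ℝ × ℝ → ℝ} (hper : Biperiodic p)
    (hp : Differentiable ℝ p) {L : ℝ} (hL : ∀ z, ‖fderiv ℝ p z‖ ≤ L) (z : ℝ × ℝ) :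
    |p z - torusInt p| ≤ L := by
  obtain ⟨u, hu, v, hv, hz⟩ := hper.exists_mem_Ico_eq z
  refine hz ▸ _root_.abs_sub_torusInt_le hp.continuous fun u' hu' v' hv' => ?_
  have hlip := convex_univ.norm_image_sub_le_of_norm_fderiv_le (fun w _ => hp w)
    (fun w _ => hL w) (mem_univ (u', v')) (mem_univ (u, v))
  have hdist : ‖(u, v) - (u', v')‖ ≤ 1 := by
    simp only [Prod.norm_def, Prod.fst_sub, Prod.snd_sub, Real.norm_eq_abs]
    exact max_le (abs_le.2 ⟨by linarith [hu.1, hu'.2], by linarith [hu.2, hu'.1]⟩)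
      (abs_le.2 ⟨by linarith [hv.1, hv'.2], by linarith [hv.2, hv'.1]⟩)
  rw [← Real.norm_eq_abs]
  exact hlip.trans (mul_le_of_le_one_right ((norm_nonneg _).trans (hL 0)) hdist)

theorem gma_gradient_estimate_general (a b c l11 l12 l22 m11 m12 m22 : ℝ)
    (hpd : (!![a, c; c, b]).PosDef)
    (h1 : m11 * l22 = 0)
    (F : ℝ × ℝ → ℝ) :
    ∃ C : ℝ, 0 < C ∧ ∀ t : ℝ, t ∈ Set.Icc (0:ℝ) 1 →
      ∀ p : ℝ × ℝ → ℝ, ContDiff ℝ 2 p → Biperiodic p →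
      (∀ z : ℝ × ℝ,
        (a + pdx (pdx p) z - t * l11 * pdx p z - t * m11 * pdy p z) *
            (b + pdy (pdy p) z - t * l22 * pdx p z - t * m22 * pdy p z) -
          (c + pdy (pdx p) z - t * l12 * pdx p z - t * m12 * pdy p z) ^ 2
            = t * Real.exp (F z) + (1 - t) * (a * b - c ^ 2)) →
      (∀ z : ℝ × ℝ,
        (!![a + pdx (pdx p) z - t * l11 * pdx p z - t * m11 * pdy p z,
            c + pdy (pdx p) z - t * l12 * pdx p z - t * m12 * pdy p z;
            c + pdy (pdx p) z - t * l12 * pdx p z - t * m12 * pdy p z,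
            b + pdy (pdy p) z - t * l22 * pdx p z - t * m22 * pdy p z]).PosDef) →
      ∀ z : ℝ × ℝ, |pdx p z| ≤ C ∧ |pdy p z| ≤ C ∧ |p z - torusInt p| ≤ C := by
  have ha : 0 < a := by simpa using hpd.diag_pos (i := 0)
  have hb : 0 < b := by simpa using hpd.diag_pos (i := 1)
  set G := gradientBound a b (|l11| + |l22| + |m11| + |m22|)
  have hG : 0 < G := gradientBound_pos ha hb (by positivity)
  refine ⟨2 * G, by positivity, fun t ht p hp hper _ hell => ?_⟩
  have hgrad : ∀ z, |pdx p z| ≤ G ∧ |pdy p z| ≤ G :=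
    hper.abs_pdx_le_and_abs_pdy_le hp ha hb (abs_le.2 ⟨by linarith [ht.1], ht.2⟩) h1
    (fun z => by simpa using (hell z).diag_pos (i := 0))
    (fun z => by simpa using (hell z).diag_pos (i := 1))
  have hosc := hper.abs_sub_torusInt_le (L := 2 * G) (hp.differentiable (by norm_num)) fun z =>
    (norm_fderiv_le_abs_pdx_add_abs_pdy p z).trans (by linarith [hgrad z])
  exact fun z => ⟨(hgrad z).1.trans (by linarith), (hgrad z).2.trans (by linarith), hosc z⟩

/-- A priori gradient and oscillation estimates, uniform in `t ∈ [0,1]`, for solutions of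
the deformed generalized Monge–Ampère equations on the 2-torus. -/
theorem gma_gradient_estimate (a b c l11 l12 l22 m11 m12 m22 : ℝ)
    (hpd : (!![a, c; c, b]).PosDef)
    (h1 : m11 * l22 = 0)
    (h2 : l11 * l22 - l12 ^ 2 = 0)
    (h3 : m11 * m22 - m12 ^ 2 = 0)
    (h4 : l11 * m22 + l22 * m11 - 2 * l12 * m12 = 0)
    (F : ℝ × ℝ → ℝ) (hF : ContDiff ℝ (⊤ : ℕ∞) F) (hFper : Biperiodic F) :
    ∃ C : ℝ, 0 < C ∧ ∀ t : ℝ, t ∈ Set.Icc (0:ℝ) 1 →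
      ∀ p : ℝ × ℝ → ℝ, ContDiff ℝ 2 p → Biperiodic p →
      (∀ z : ℝ × ℝ,
        (a + pdx (pdx p) z - t * l11 * pdx p z - t * m11 * pdy p z) *
            (b + pdy (pdy p) z - t * l22 * pdx p z - t * m22 * pdy p z) -
          (c + pdy (pdx p) z - t * l12 * pdx p z - t * m12 * pdy p z) ^ 2
            = t * Real.exp (F z) + (1 - t) * (a * b - c ^ 2)) →
      (∀ z : ℝ × ℝ,
        (!![a + pdx (pdx p) z - t * l11 * pdx p z - t * m11 * pdy p z,
            c + pdy (pdx p) z - t * l12 * pdx p z - t * m12 * pdy p z;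
            c + pdy (pdx p) z - t * l12 * pdx p z - t * m12 * pdy p z,
            b + pdy (pdy p) z - t * l22 * pdx p z - t * m22 * pdy p z]).PosDef) →
      ∀ z : ℝ × ℝ, |pdx p z| ≤ C ∧ |pdy p z| ≤ C ∧ |p z - torusInt p| ≤ C :=
  gma_gradient_estimate_general a b c l11 l12 l22 m11 m12 m22 hpd h1 F
end

section
/- Let F : ℝ² → ℝ be a continuous biperiodic function, and let p, p̃ be twice continuously differentiable biperiodic functions such that the functions P(u,v) = ½(u² + v²) + p(u,v) and P̃(u,v) = ½(u² + v²) + p̃(u,v) both satisfy the Monge–Ampère equation P_uu P_vv − P_uv² = e^F on ℝ² and both satisfy the positivity condition P_uu + P_vv > 0 (respectively P̃_uu + P̃_vv > 0) everywhere. Then p − p̃ is a constant function. -/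
/-!
Write `A = D²P`, `B = D²Q` and `r = q - p`, so `B = A + D²r`. Both Hessians are positive definite
with determinant `e^F`, and for such 2×2 matrices `tr (cof A · (B - A)) ≥ 0`, with equality only
if `A = B`. On the other hand `tr (cof A · D²r) = Δr + tr (cof D²p · D²r)` has zero integral over
the torus: `Δr` is a sum of derivatives of periodic functions, and `tr (cof D²p · D²r)` is the sum
of the Jacobians of `(∂ᵤr, ∂ᵥp)` and `(∂ᵤp, ∂ᵥr)`. Hence the nonnegative integrand vanishes,
`D²r = 0`, and the periodic function `r` is constant.

The gradients are only `C¹`, so the Jacobians cannot be integrated by parts directly. For central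
difference quotients `∫ Dᵤf · Dᵥg = ∫ Dᵥf · Dᵤg` holds exactly, by translation invariance of the
torus integral, and dominated convergence carries it to the limit.
-/

open MeasureTheory

open Set Filter Topology

lemma biperiodic_iff_add {f : ℝ × ℝ → ℝ} :
    Biperiodic f ↔ ∀ z, f (z + (1, 0)) = f z ∧ f (z + (0, 1)) = f z := by
  simp [Biperiodic, Prod.forall]

lemma fract_mem_Icc_prod_Icc (z : ℝ × ℝ) :
    (Int.fract z.1, Int.fract z.2) ∈ Icc (0 : ℝ) 1 ×ˢ Icc (0 : ℝ) 1 :=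
  ⟨⟨Int.fract_nonneg _, (Int.fract_lt_one _).le⟩, ⟨Int.fract_nonneg _, (Int.fract_lt_one _).le⟩⟩

namespace Biperiodic

variable {f g : ℝ × ℝ → ℝ}

lemma comp_add_right (hf : Biperiodic f) (a : ℝ × ℝ) : Biperiodic fun z => f (z + a) := by
  rw [biperiodic_iff_add] at hf ⊢
  intro z
  simpa only [add_right_comm z] using hf (z + a)

lemma mul (hf : Biperiodic f) (hg : Biperiodic g) : Biperiodic fun z => f z * g z := fun x y => by
  simp only [(hf x y).1, (hf x y).2, (hg x y).1, (hg x y).2, and_self]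

lemma sub (hf : Biperiodic f) (hg : Biperiodic g) : Biperiodic fun z => f z - g z := fun x y => by
  simp only [(hf x y).1, (hf x y).2, (hg x y).1, (hg x y).2, and_self]

lemma add (hf : Biperiodic f) (hg : Biperiodic g) : Biperiodic fun z => f z + g z := fun x y => by
  simp only [(hf x y).1, (hf x y).2, (hg x y).1, (hg x y).2, and_self]

lemma apply_fract (hf : Biperiodic f) (x y : ℝ) : f (Int.fract x, Int.fract y) = f (x, y) := by
  have hx : Function.Periodic (fun s => f (s, Int.fract y)) 1 := fun s => (hf s _).1
  have hy : Function.Periodic (fun t => f (x, t)) 1 := fun t => (hf x t).2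
  have h1 := hx.sub_int_mul_eq (x := x) ⌊x⌋
  have h2 := hy.sub_int_mul_eq (x := y) ⌊y⌋
  simp only [mul_one, Int.self_sub_floor] at h1 h2
  rw [h1, h2]

lemma exists_abs_le (hf : Biperiodic f) (hc : Continuous f) : ∃ M, ∀ z, |f z| ≤ M := by
  obtain ⟨M, hM⟩ := (isCompact_Icc.prod isCompact_Icc).exists_bound_of_continuousOn
    (s := Icc (0 : ℝ) 1 ×ˢ Icc (0 : ℝ) 1) hc.continuousOn
  refine ⟨M, fun z => ?_⟩
  rw [← hf.apply_fract]
  exact hM _ (fract_mem_Icc_prod_Icc z)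

lemma fderiv_apply (hf : Biperiodic f) (v : ℝ × ℝ) : Biperiodic fun z => fderiv ℝ f z v := by
  rw [biperiodic_iff_add] at hf ⊢
  intro z
  simp only [← fderiv_comp_add_right, funext fun z => (hf z).1, funext fun z => (hf z).2,
    and_self]

lemma pdx (hf : Biperiodic f) : Biperiodic (_root_.pdx f) :=
  hf.fderiv_apply (1, 0)

lemma pdy (hf : Biperiodic f) : Biperiodic (_root_.pdy f) :=
  hf.fderiv_apply (0, 1)

end Biperiodic

lemma Continuous.integrableOn_Ioc_prod_Ioc {f : ℝ × ℝ → ℝ} (hf : Continuous f) :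
    IntegrableOn f (Ioc (0 : ℝ) 1 ×ˢ Ioc (0 : ℝ) 1) :=
  (hf.continuousOn.integrableOn_compact (isCompact_Icc.prod isCompact_Icc)).mono_set
    (prod_mono Ioc_subset_Icc_self Ioc_subset_Icc_self)

lemma torusInt_eq_setIntegral {f : ℝ × ℝ → ℝ} (hf : Continuous f) :
    torusInt f = ∫ z in Ioc (0 : ℝ) 1 ×ˢ Ioc (0 : ℝ) 1, f z := by
  rw [Measure.volume_eq_prod, setIntegral_prod f (by simpa [← Measure.volume_eq_prod]
    using hf.integrableOn_Ioc_prod_Ioc)]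
  simp only [torusInt, intervalIntegral.integral_of_le zero_le_one]

lemma torusInt_sub {f g : ℝ × ℝ → ℝ} (hf : Continuous f) (hg : Continuous g) :
    torusInt (fun z => f z - g z) = torusInt f - torusInt g := by
  rw [torusInt_eq_setIntegral hf, torusInt_eq_setIntegral hg,
    torusInt_eq_setIntegral (f := fun z => f z - g z) (hf.sub hg),
    integral_sub hf.integrableOn_Ioc_prod_Ioc hg.integrableOn_Ioc_prod_Ioc]

lemma torusInt_add {f g : ℝ × ℝ → ℝ} (hf : Continuous f) (hg : Continuous g) :
    torusInt (fun z => f z + g z) = torusInt f + torusInt g := by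
  rw [torusInt_eq_setIntegral hf, torusInt_eq_setIntegral hg,
    torusInt_eq_setIntegral (f := fun z => f z + g z) (hf.add hg),
    integral_add hf.integrableOn_Ioc_prod_Ioc hg.integrableOn_Ioc_prod_Ioc]

lemma torusInt_div_const (f : ℝ × ℝ → ℝ) (c : ℝ) :
    torusInt (fun z => f z / c) = torusInt f / c := by
  simp only [torusInt, intervalIntegral.integral_div]

lemma torusInt_comp_add_right {f : ℝ × ℝ → ℝ} (hper : Biperiodic f) (a : ℝ × ℝ) :
    torusInt (fun z => f (z + a)) = torusInt f := by
  have hy : ∀ x, ∫ y in (0 : ℝ)..1, f (x, y + a.2) = ∫ y in (0 : ℝ)..1, f (x, y) := fun x => by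
    rw [intervalIntegral.integral_comp_add_right (fun y => f (x, y)), zero_add, add_comm,
      Function.Periodic.intervalIntegral_add_eq (fun y => (hper x y).2) a.2 0, zero_add]
  have hx : Function.Periodic (fun x => ∫ y in (0 : ℝ)..1, f (x, y)) 1 := fun x =>
    intervalIntegral.integral_congr fun y _ => (hper x y).1
  change ∫ x in (0 : ℝ)..1, ∫ y in (0 : ℝ)..1, f (x + a.1, y + a.2) = _
  simp only [hy]
  rw [intervalIntegral.integral_comp_add_right (fun x => ∫ y in (0 : ℝ)..1, f (x, y)), zero_add,
    add_comm, hx.intervalIntegral_add_eq a.1 0, zero_add]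
  rfl

lemma torusInt_eq_zero_of_tendsto {ι : Type*} {l : Filter ι} [l.NeBot] [l.IsCountablyGenerated]
    {F : ι → ℝ × ℝ → ℝ} {f : ℝ × ℝ → ℝ} {M : ℝ} (hF : ∀ i, Continuous (F i))
    (hf : Continuous f) (hM : ∀ i z, |F i z| ≤ M)
    (hlim : ∀ z, Tendsto (fun i => F i z) l (𝓝 (f z))) (h0 : ∀ i, torusInt (F i) = 0) :
    torusInt f = 0 := by
  have hint : Tendsto (fun i => torusInt (F i)) l (𝓝 (torusInt f)) := by
    simp only [torusInt_eq_setIntegral, hF, hf]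
    exact tendsto_integral_filter_of_dominated_convergence (fun _ => M)
      (.of_forall fun i => (hF i).aestronglyMeasurable) (.of_forall fun i => ae_of_all _ (hM i))
      (integrableOn_const (by simp [Measure.volume_eq_prod, Measure.prod_prod]))
      (ae_of_all _ hlim)
  exact tendsto_nhds_unique hint (by simp [h0])

lemma Biperiodic.eq_zero_of_torusInt_eq_zero {f : ℝ × ℝ → ℝ} (hper : Biperiodic f)
    (hf : Continuous f) (h0 : ∀ z, 0 ≤ f z) (hint : torusInt f = 0) (z : ℝ × ℝ) : f z = 0 := by
  have hae : f =ᵐ[volume.restrict (Ioc (0 : ℝ) 1 ×ˢ Ioc (0 : ℝ) 1)] 0 := by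
    rw [torusInt_eq_setIntegral hf] at hint
    exact (setIntegral_eq_zero_iff_of_nonneg_ae (ae_of_all _ h0)
      hf.integrableOn_Ioc_prod_Ioc).1 hint
  have hopen : EqOn f 0 (Ioo (0 : ℝ) 1 ×ˢ Ioo (0 : ℝ) 1) := Measure.eqOn_open_of_ae_eq
    (ae_restrict_of_ae_restrict_of_subset
      (prod_mono Ioo_subset_Ioc_self Ioo_subset_Ioc_self) hae)
    (isOpen_Ioo.prod isOpen_Ioo) hf.continuousOn continuousOn_const
  have hsquare := hopen.closure hf continuous_const
  rw [closure_prod_eq, closure_Ioo zero_ne_one] at hsquare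
  rw [← hper.apply_fract]
  exact hsquare (fract_mem_Icc_prod_Icc z)

noncomputable def centralDiff {E : Type*} [AddCommGroup E] [Module ℝ E] (h : ℝ) (v : E)
    (f : E → ℝ) (z : E) : ℝ :=
  (f (z + h • v) - f (z - h • v)) / (2 * h)

section centralDiff

variable {E : Type*} [NormedAddCommGroup E] [NormedSpace ℝ E] {f : E → ℝ}

lemma exists_centralDiff_eq_fderiv (hf : Differentiable ℝ f) {h : ℝ} (hh : h ≠ 0) (v z : E) :
    ∃ ξ ∈ segment ℝ (z - h • v) (z + h • v), centralDiff h v f z = fderiv ℝ f ξ v := by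
  obtain ⟨ξ, hξ, hmvt⟩ := domain_mvt (fun x _ => (hf x).hasFDerivAt.hasFDerivWithinAt)
    convex_univ (mem_univ (z - h • v)) (mem_univ (z + h • v))
  refine ⟨ξ, hξ, ?_⟩
  rw [centralDiff, hmvt, show z + h • v - (z - h • v) = (2 * h) • v by module, map_smul,
    smul_eq_mul]
  field_simp

lemma abs_centralDiff_le (hf : Differentiable ℝ f) {v : E} {M : ℝ}
    (hM : ∀ w, |fderiv ℝ f w v| ≤ M) (h : ℝ) (z : E) : |centralDiff h v f z| ≤ M := by
  rcases eq_or_ne h 0 with rfl | hh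
  · simpa [centralDiff] using (abs_nonneg _).trans (hM z)
  · obtain ⟨ξ, -, hξ⟩ := exists_centralDiff_eq_fderiv hf hh v z
    exact hξ ▸ hM ξ

lemma tendsto_centralDiff (hf : ContDiff ℝ 1 f) (v z : E) :
    Tendsto (fun h => centralDiff h v f z) (𝓝[≠] 0) (𝓝 (fderiv ℝ f z v)) := by
  have hc : Continuous fun w => fderiv ℝ f w v :=
    (hf.continuous_fderiv one_ne_zero).clm_apply continuous_const
  rw [Metric.tendsto_nhdsWithin_nhds]
  intro ε hε
  obtain ⟨δ, hδ, hδε⟩ := Metric.continuous_iff.1 hc z ε hε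
  refine ⟨δ / (‖v‖ + 1), by positivity, fun h hh hdist => ?_⟩
  obtain ⟨ξ, hξ, heq⟩ := exists_centralDiff_eq_fderiv (hf.differentiable one_ne_zero) hh v z
  rw [heq]
  apply hδε
  have hseg : segment ℝ (z - h • v) (z + h • v) ⊆ Metric.closedBall z ‖h • v‖ :=
    (convex_closedBall _ _).segment_subset (by simp) (by simp)
  have hhv : ‖h • v‖ < δ := by
    rw [Real.dist_eq, sub_zero] at hdist
    rw [lt_div_iff₀ (by positivity)] at hdist
    rw [norm_smul, Real.norm_eq_abs]
    nlinarith [abs_nonneg h, norm_nonneg v]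
  exact (Metric.mem_closedBall.1 (hseg hξ)).trans_lt hhv

@[fun_prop]
lemma Continuous.centralDiff (hf : Continuous f) (h : ℝ) (v : E) :
    Continuous fun z => _root_.centralDiff h v f z := by
  unfold _root_.centralDiff
  fun_prop

end centralDiff

lemma Biperiodic.exists_abs_centralDiff_le {f : ℝ × ℝ → ℝ} (hf : ContDiff ℝ 1 f)
    (hper : Biperiodic f) (v : ℝ × ℝ) : ∃ M, ∀ h z, |centralDiff h v f z| ≤ M := by
  obtain ⟨M, hM⟩ := (hper.fderiv_apply v).exists_abs_le
    ((hf.continuous_fderiv one_ne_zero).clm_apply continuous_const)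
  exact ⟨M, abs_centralDiff_le (hf.differentiable one_ne_zero) hM⟩

lemma Biperiodic.centralDiff {f : ℝ × ℝ → ℝ} (hf : Biperiodic f) (h : ℝ) (v : ℝ × ℝ) :
    Biperiodic (_root_.centralDiff h v f) := fun x y => by
  simp only [_root_.centralDiff, sub_eq_add_neg _ (h • v)]
  simp only [((hf.comp_add_right (h • v)) x y).1, ((hf.comp_add_right (h • v)) x y).2,
    ((hf.comp_add_right (-(h • v))) x y).1, ((hf.comp_add_right (-(h • v))) x y).2, and_self]

lemma centralDiff_comm (h k : ℝ) (v w : ℝ × ℝ) (f : ℝ × ℝ → ℝ) :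
    centralDiff h v (centralDiff k w f) = centralDiff k w (centralDiff h v f) := by
  ext z
  simp only [_root_.centralDiff]
  rw [add_right_comm z (k • w), add_sub_right_comm z (k • w), sub_add_eq_add_sub z (k • w),
    sub_right_comm z (k • w)]
  ring

section summationByParts

variable {f g : ℝ × ℝ → ℝ}

lemma torusInt_centralDiff_mul (hf : Continuous f) (hg : Continuous g) (hfp : Biperiodic f)
    (hgp : Biperiodic g) (h : ℝ) (v : ℝ × ℝ) :
    torusInt (fun z => centralDiff h v f z * g z) =
      -torusInt (fun z => f z * centralDiff h v g z) := by
  have shift : ∀ a,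
      torusInt (fun z => f (z + a) * g z) = torusInt (fun z => f z * g (z + -a)) := fun a => by
    simpa only [add_neg_cancel_right] using
      torusInt_comp_add_right (hfp.mul (hgp.comp_add_right (-a))) a
  simp only [centralDiff, sub_mul, mul_sub, div_mul_eq_mul_div, mul_div_assoc',
    sub_eq_add_neg _ (h • v)]
  rw [torusInt_div_const, torusInt_div_const, torusInt_sub (by fun_prop) (by fun_prop),
    torusInt_sub (by fun_prop) (by fun_prop), shift, shift, neg_neg]
  ring

lemma torusInt_centralDiff (hf : Continuous f) (hfp : Biperiodic f) (h : ℝ) (v : ℝ × ℝ) :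
    torusInt (centralDiff h v f) = 0 := by
  simpa [centralDiff, torusInt] using torusInt_centralDiff_mul hf continuous_const hfp
    (g := fun _ => 1) (fun _ _ => ⟨rfl, rfl⟩) h v

lemma torusInt_centralDiff_mul_centralDiff_comm (hf : Continuous f) (hg : Continuous g)
    (hfp : Biperiodic f) (hgp : Biperiodic g) (h : ℝ) (v w : ℝ × ℝ) :
    torusInt (fun z => centralDiff h v f z * centralDiff h w g z) =
      torusInt (fun z => centralDiff h w f z * centralDiff h v g z) := by
  rw [torusInt_centralDiff_mul hf (hg.centralDiff h w) hfp (hgp.centralDiff h w),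
    torusInt_centralDiff_mul hf (hg.centralDiff h v) hfp (hgp.centralDiff h v), centralDiff_comm]

end summationByParts

lemma torusInt_fderiv_eq_zero {f : ℝ × ℝ → ℝ} (hf : ContDiff ℝ 1 f) (hfp : Biperiodic f)
    (v : ℝ × ℝ) : torusInt (fun z => fderiv ℝ f z v) = 0 := by
  obtain ⟨M, hM⟩ := hfp.exists_abs_centralDiff_le hf v
  exact torusInt_eq_zero_of_tendsto (l := 𝓝[≠] 0) (fun h => hf.continuous.centralDiff h v)
    ((hf.continuous_fderiv one_ne_zero).clm_apply continuous_const) hM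
    (tendsto_centralDiff hf v) (torusInt_centralDiff hf.continuous hfp · v)

lemma torusInt_pdx_eq_zero {f : ℝ × ℝ → ℝ} (hf : ContDiff ℝ 1 f) (hper : Biperiodic f) :
    torusInt (pdx f) = 0 :=
  torusInt_fderiv_eq_zero hf hper (1, 0)

lemma torusInt_pdy_eq_zero {f : ℝ × ℝ → ℝ} (hf : ContDiff ℝ 1 f) (hper : Biperiodic f) :
    torusInt (pdy f) = 0 :=
  torusInt_fderiv_eq_zero hf hper (0, 1)

theorem torusInt_jacobian_eq_zero {f g : ℝ × ℝ → ℝ} (hf : ContDiff ℝ 1 f)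
    (hg : ContDiff ℝ 1 g) (hfp : Biperiodic f) (hgp : Biperiodic g) (v w : ℝ × ℝ) :
    torusInt (fun z => fderiv ℝ f z v * fderiv ℝ g z w - fderiv ℝ f z w * fderiv ℝ g z v) =
      0 := by
  have hfc := hf.continuous
  have hgc := hg.continuous
  obtain ⟨Mfv, hfv⟩ := hfp.exists_abs_centralDiff_le hf v
  obtain ⟨Mfw, hfw⟩ := hfp.exists_abs_centralDiff_le hf w
  obtain ⟨Mgv, hgv⟩ := hgp.exists_abs_centralDiff_le hg v
  obtain ⟨Mgw, hgw⟩ := hgp.exists_abs_centralDiff_le hg w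
  refine torusInt_eq_zero_of_tendsto (l := 𝓝[≠] 0) (M := Mfv * Mgw + Mfw * Mgv)
    (F := fun h z => centralDiff h v f z * centralDiff h w g z -
      centralDiff h w f z * centralDiff h v g z)
    (fun h => ?_) (by fun_prop) (fun h z => ?_)
    (fun z => ((tendsto_centralDiff hf v z).mul (tendsto_centralDiff hg w z)).sub
      ((tendsto_centralDiff hf w z).mul (tendsto_centralDiff hg v z))) (fun h => ?_)
  · fun_prop
  · have := (abs_nonneg _).trans (hfv h z)
    have := (abs_nonneg _).trans (hfw h z)
    calc _ ≤ |centralDiff h v f z| * |centralDiff h w g z| +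
          |centralDiff h w f z| * |centralDiff h v g z| := by
          rw [← abs_mul, ← abs_mul]
          exact abs_sub _ _
      _ ≤ Mfv * Mgw + Mfw * Mgv := by gcongr <;> apply_assumption
  · rw [torusInt_sub (by fun_prop) (by fun_prop),
      torusInt_centralDiff_mul_centralDiff_comm hfc hgc hfp hgp, sub_self]

section secondDerivatives

variable {f g : ℝ × ℝ → ℝ}

lemma ContDiff.pdx {m n : WithTop ℕ∞} (hf : ContDiff ℝ n f) (hmn : m + 1 ≤ n) :
    ContDiff ℝ m (_root_.pdx f) :=
  (hf.fderiv_right hmn).clm_apply contDiff_const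

lemma ContDiff.pdy {m n : WithTop ℕ∞} (hf : ContDiff ℝ n f) (hmn : m + 1 ≤ n) :
    ContDiff ℝ m (_root_.pdy f) :=
  (hf.fderiv_right hmn).clm_apply contDiff_const

lemma pdx_pdy_eq_pdy_pdx (hf : ContDiff ℝ 2 f) (z : ℝ × ℝ) : pdx (pdy f) z = pdy (pdx f) z := by
  have hd : DifferentiableAt ℝ (fderiv ℝ f) z :=
    (hf.fderiv_right (m := 1) le_rfl).differentiable one_ne_zero z
  have hsnd : ∀ u v, fderiv ℝ (fun w => fderiv ℝ f w v) z u = fderiv ℝ (fderiv ℝ f) z u v :=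
    fun u v => by simp [fderiv_clm_apply hd (differentiableAt_const v)]
  change fderiv ℝ (fun w => fderiv ℝ f w (0, 1)) z (1, 0) =
    fderiv ℝ (fun w => fderiv ℝ f w (1, 0)) z (0, 1)
  rw [hsnd, hsnd]
  exact (hf.contDiffAt.isSymmSndFDerivAt (by simp)).eq _ _

lemma pdx_add (hf : Differentiable ℝ f) (hg : Differentiable ℝ g) :
    pdx (fun z => f z + g z) = fun z => pdx f z + pdx g z := by
  ext z
  simp [pdx, fderiv_fun_add (hf z) (hg z)]

lemma pdy_add (hf : Differentiable ℝ f) (hg : Differentiable ℝ g) :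
    pdy (fun z => f z + g z) = fun z => pdy f z + pdy g z := by
  ext z
  simp [pdy, fderiv_fun_add (hf z) (hg z)]

lemma hessian_add (hf : ContDiff ℝ 2 f) (hg : ContDiff ℝ 2 g) (z : ℝ × ℝ) :
    pdx (pdx (fun z => f z + g z)) z = pdx (pdx f) z + pdx (pdx g) z ∧
    pdy (pdx (fun z => f z + g z)) z = pdy (pdx f) z + pdy (pdx g) z ∧
    pdy (pdy (fun z => f z + g z)) z = pdy (pdy f) z + pdy (pdy g) z := by
  have hfx := (hf.pdx (m := 1) le_rfl).differentiable one_ne_zero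
  have hfy := (hf.pdy (m := 1) le_rfl).differentiable one_ne_zero
  have hgx := (hg.pdx (m := 1) le_rfl).differentiable one_ne_zero
  have hgy := (hg.pdy (m := 1) le_rfl).differentiable one_ne_zero
  rw [pdx_add (hf.differentiable two_ne_zero) (hg.differentiable two_ne_zero),
    pdy_add (hf.differentiable two_ne_zero) (hg.differentiable two_ne_zero), pdx_add hfx hgx,
    pdy_add hfx hgx, pdy_add hfy hgy]
  exact ⟨rfl, rfl, rfl⟩

end secondDerivatives

noncomputable def hessDet (f : ℝ × ℝ → ℝ) (z : ℝ × ℝ) : ℝ :=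
  pdx (pdx f) z * pdy (pdy f) z - pdy (pdx f) z ^ 2

/-- `tr (cof D²f · D²g)`, the polarisation of `hessDet`: `mixedHessDet f f = 2 * hessDet f`. -/
noncomputable def mixedHessDet (f g : ℝ × ℝ → ℝ) (z : ℝ × ℝ) : ℝ :=
  pdy (pdy f) z * pdx (pdx g) z - 2 * (pdy (pdx f) z * pdy (pdx g) z) +
    pdx (pdx f) z * pdy (pdy g) z

lemma Biperiodic.mixedHessDet {f g : ℝ × ℝ → ℝ} (hf : Biperiodic f) (hg : Biperiodic g) :
    Biperiodic (_root_.mixedHessDet f g) := by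
  have two : Biperiodic fun _ => (2 : ℝ) := fun _ _ => ⟨rfl, rfl⟩
  exact ((hf.pdy.pdy.mul hg.pdx.pdx).sub (two.mul (hf.pdx.pdy.mul hg.pdx.pdy))).add
    (hf.pdx.pdx.mul hg.pdy.pdy)

lemma continuous_mixedHessDet {f g : ℝ × ℝ → ℝ} (hf : ContDiff ℝ 2 f) (hg : ContDiff ℝ 2 g) :
    Continuous (mixedHessDet f g) := by
  have := hf.pdx (m := 1) le_rfl
  have := hf.pdy (m := 1) le_rfl
  have := hg.pdx (m := 1) le_rfl
  have := hg.pdy (m := 1) le_rfl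
  unfold mixedHessDet pdx pdy
  fun_prop

theorem torusInt_mixedHessDet_eq_zero {f g : ℝ × ℝ → ℝ} (hf : ContDiff ℝ 2 f)
    (hg : ContDiff ℝ 2 g) (hfp : Biperiodic f) (hgp : Biperiodic g) :
    torusInt (mixedHessDet f g) = 0 := by
  have hf1 := hf.pdx (m := 1) le_rfl
  have hf2 := hf.pdy (m := 1) le_rfl
  have hg1 := hg.pdx (m := 1) le_rfl
  have hg2 := hg.pdy (m := 1) le_rfl
  have hsplit : mixedHessDet f g = fun z =>
      (fderiv ℝ (pdx g) z (1, 0) * fderiv ℝ (pdy f) z (0, 1) -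
        fderiv ℝ (pdx g) z (0, 1) * fderiv ℝ (pdy f) z (1, 0)) +
      (fderiv ℝ (pdx f) z (1, 0) * fderiv ℝ (pdy g) z (0, 1) -
        fderiv ℝ (pdx f) z (0, 1) * fderiv ℝ (pdy g) z (1, 0)) := by
    ext z
    have hsymf := pdx_pdy_eq_pdy_pdx hf z
    have hsymg := pdx_pdy_eq_pdy_pdx hg z
    simp only [mixedHessDet, pdx, pdy] at hsymf hsymg ⊢
    rw [hsymf, hsymg]
    ring
  rw [hsplit, torusInt_add (by fun_prop) (by fun_prop),
    torusInt_jacobian_eq_zero hg1 hf2 (hgp.fderiv_apply _) (hfp.fderiv_apply _) (1, 0) (0, 1),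
    torusInt_jacobian_eq_zero hf1 hg2 (hfp.fderiv_apply _) (hgp.fderiv_apply _) (1, 0) (0, 1),
    add_zero]

section quadratic

variable {p : ℝ × ℝ → ℝ}

lemma pdx_half_sq_add (hp : Differentiable ℝ p) :
    pdx (fun z => (z.1 ^ 2 + z.2 ^ 2) / 2 + p z) = fun z => z.1 + pdx p z := by
  ext z
  simp (disch := fun_prop) only [pdx, div_eq_mul_inv, fderiv_fun_add, fderiv_fun_pow, fderiv_fst,
    fderiv_snd, fderiv_mul_const]
  simp

lemma pdy_half_sq_add (hp : Differentiable ℝ p) :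
    pdy (fun z => (z.1 ^ 2 + z.2 ^ 2) / 2 + p z) = fun z => z.2 + pdy p z := by
  ext z
  simp (disch := fun_prop) only [pdy, div_eq_mul_inv, fderiv_fun_add, fderiv_fun_pow, fderiv_fst,
    fderiv_snd, fderiv_mul_const]
  simp

lemma mixedHessDet_half_sq_add (hp : ContDiff ℝ 2 p) (g : ℝ × ℝ → ℝ) (z : ℝ × ℝ) :
    mixedHessDet (fun z => (z.1 ^ 2 + z.2 ^ 2) / 2 + p z) g z =
      pdx (pdx g) z + pdy (pdy g) z + mixedHessDet p g z := by
  have hx := (hp.pdx (m := 1) le_rfl).differentiable one_ne_zero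
  have hy := (hp.pdy (m := 1) le_rfl).differentiable one_ne_zero
  rw [mixedHessDet, mixedHessDet, pdx_half_sq_add (hp.differentiable two_ne_zero),
    pdy_half_sq_add (hp.differentiable two_ne_zero), pdx_add differentiable_fst hx,
    pdy_add differentiable_fst hx, pdy_add differentiable_snd hy]
  simp [pdx, pdy, fderiv_fst, fderiv_snd]
  ring

theorem mixedHessDet_half_sq_add_eq_zero (hp : ContDiff ℝ 2 p) (hpper : Biperiodic p)
    {r : ℝ × ℝ → ℝ} (hr : ContDiff ℝ 2 r) (hrper : Biperiodic r)
    (hnonneg : ∀ z, 0 ≤ mixedHessDet (fun z => (z.1 ^ 2 + z.2 ^ 2) / 2 + p z) r z)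
    (z : ℝ × ℝ) : mixedHessDet (fun z => (z.1 ^ 2 + z.2 ^ 2) / 2 + p z) r z = 0 := by
  have hrxx : Continuous (pdx (pdx r)) := ((hr.pdx le_rfl).pdx (m := 0) le_rfl).continuous
  have hryy : Continuous (pdy (pdy r)) := ((hr.pdy le_rfl).pdy (m := 0) le_rfl).continuous
  rw [funext (mixedHessDet_half_sq_add hp r)] at hnonneg ⊢
  refine (hrper.pdx.pdx.add hrper.pdy.pdy |>.add (hpper.mixedHessDet hrper))
    |>.eq_zero_of_torusInt_eq_zero ((hrxx.add hryy).add (continuous_mixedHessDet hp hr))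
    hnonneg ?_ z
  rw [torusInt_add (f := fun z => pdx (pdx r) z + pdy (pdy r) z) (hrxx.add hryy)
      (continuous_mixedHessDet hp hr), torusInt_add hrxx hryy,
    torusInt_pdx_eq_zero (hr.pdx le_rfl) hrper.pdx,
    torusInt_pdy_eq_zero (hr.pdy le_rfl) hrper.pdy, torusInt_mixedHessDet_eq_zero hp hr hpper hrper,
    add_zero, add_zero]

end quadratic

section constancy

variable {f : ℝ × ℝ → ℝ}

lemma fderiv_eq_zero_of_pdx_of_pdy {z : ℝ × ℝ} (hx : pdx f z = 0) (hy : pdy f z = 0) :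
    fderiv ℝ f z = 0 := by
  refine ContinuousLinearMap.ext fun v => ?_
  have hv : v = v.1 • ((1 : ℝ), (0 : ℝ)) + v.2 • ((0 : ℝ), (1 : ℝ)) := by simp
  rw [hv, map_add, map_smul, map_smul]
  simp only [pdx, pdy] at hx hy
  simp [hx, hy]

lemma eq_of_pdx_of_pdy_eq_zero (hf : Differentiable ℝ f) (hx : ∀ z, pdx f z = 0)
    (hy : ∀ z, pdy f z = 0) (z w : ℝ × ℝ) : f z = f w :=
  is_const_of_fderiv_eq_zero hf (fun z => fderiv_eq_zero_of_pdx_of_pdy (hx z) (hy z)) z w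

lemma fderiv_apply_eq_zero_of_periodic {E : Type*} [NormedAddCommGroup E] [NormedSpace ℝ E]
    {f : E → ℝ} (hf : Differentiable ℝ f) {v : E} (hv : ∀ z, f (z + v) = f z)
    (hc : ∀ z w, fderiv ℝ f z v = fderiv ℝ f w v) (z : E) : fderiv ℝ f z v = 0 := by
  obtain ⟨ξ, -, hξ⟩ := domain_mvt (fun x _ => (hf x).hasFDerivAt.hasFDerivWithinAt)
    convex_univ (mem_univ z) (mem_univ (z + v))
  rw [hv, sub_self, add_sub_cancel_left] at hξ
  rw [hc z ξ, hξ]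

theorem eq_of_hessian_eq_zero (hf : ContDiff ℝ 2 f) (hper : Biperiodic f)
    (hxx : ∀ z, pdx (pdx f) z = 0) (hxy : ∀ z, pdy (pdx f) z = 0)
    (hyy : ∀ z, pdy (pdy f) z = 0) (z w : ℝ × ℝ) : f z = f w := by
  have hd := hf.differentiable two_ne_zero
  have hyx : ∀ z, pdx (pdy f) z = 0 := fun z => (pdx_pdy_eq_pdy_pdx hf z).trans (hxy z)
  have hper' := biperiodic_iff_add.1 hper
  have hx : ∀ z, pdx f z = 0 := fderiv_apply_eq_zero_of_periodic hd (fun z => (hper' z).1)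
    (eq_of_pdx_of_pdy_eq_zero ((hf.pdx (m := 1) le_rfl).differentiable one_ne_zero) hxx hxy)
  have hy : ∀ z, pdy f z = 0 := fderiv_apply_eq_zero_of_periodic hd (fun z => (hper' z).2)
    (eq_of_pdx_of_pdy_eq_zero ((hf.pdy (m := 1) le_rfl).differentiable one_ne_zero) hyx hyy)
  exact eq_of_pdx_of_pdy_eq_zero hd hx hy z w

end constancy

/-! For `A = [[a, b], [b, c]]` and `H = [[x, y], [y, w]]`, `c x - 2 b y + a w = tr (cof A · H)`. -/

section cofactor

variable {a b c x y w e : ℝ}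

lemma mul_cofactor_pairing_eq (h : a * c - b ^ 2 = e) (h' : (a + x) * (c + w) - (b + y) ^ 2 = e) :
    a * (a + x) * (c * x - 2 * (b * y) + a * w) = (a * y - x * b) ^ 2 + e * x ^ 2 := by
  linear_combination (x ^ 2 - a ^ 2) * h + a ^ 2 * h'

lemma pos_of_det_pos_of_trace_pos (h : a * c - b ^ 2 = e) (he : 0 < e) (ht : 0 < a + c) :
    0 < a := by
  nlinarith [sq_nonneg b]

lemma cofactor_pairing_nonneg (h : a * c - b ^ 2 = e) (h' : (a + x) * (c + w) - (b + y) ^ 2 = e)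
    (he : 0 < e) (ht : 0 < a + c) (ht' : 0 < a + x + (c + w)) :
    0 ≤ c * x - 2 * (b * y) + a * w := by
  refine nonneg_of_mul_nonneg_right ?_ (mul_pos (pos_of_det_pos_of_trace_pos h he ht)
    (pos_of_det_pos_of_trace_pos h' he ht'))
  rw [mul_cofactor_pairing_eq h h']
  positivity

lemma eq_zero_of_cofactor_pairing_eq_zero (h : a * c - b ^ 2 = e)
    (h' : (a + x) * (c + w) - (b + y) ^ 2 = e) (he : 0 < e) (ht : 0 < a + c)
    (h0 : c * x - 2 * (b * y) + a * w = 0) : x = 0 ∧ y = 0 ∧ w = 0 := by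
  have ha := pos_of_det_pos_of_trace_pos h he ht
  have hsum := mul_cofactor_pairing_eq h h'
  rw [h0, mul_zero] at hsum
  obtain rfl : x = 0 := by
    have : e * x ^ 2 = 0 := by nlinarith [sq_nonneg (a * y - x * b), sq_nonneg x]
    exact pow_eq_zero_iff two_ne_zero |>.1 ((mul_eq_zero.1 this).resolve_left he.ne')
  obtain rfl : y = 0 := by
    have : (a * y) ^ 2 = 0 := by nlinarith
    exact (mul_eq_zero.1 (pow_eq_zero_iff two_ne_zero |>.1 this)).resolve_left ha.ne'
  refine ⟨rfl, rfl, (mul_eq_zero.1 (?_ : a * w = 0)).resolve_left ha.ne'⟩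
  linarith

end cofactor

section hessian

variable {f g : ℝ × ℝ → ℝ} {z : ℝ × ℝ} {e : ℝ}

lemma mixedHessDet_nonneg (hf : ContDiff ℝ 2 f) (hg : ContDiff ℝ 2 g) (he : 0 < e)
    (hdf : hessDet f z = e) (hdfg : hessDet (fun z => f z + g z) z = e)
    (htf : 0 < pdx (pdx f) z + pdy (pdy f) z)
    (htfg : 0 < pdx (pdx (fun z => f z + g z)) z + pdy (pdy (fun z => f z + g z)) z) :
    0 ≤ mixedHessDet f g z := by
  obtain ⟨hxx, hxy, hyy⟩ := hessian_add hf hg z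
  rw [hessDet, hxx, hxy, hyy] at hdfg
  rw [hxx, hyy] at htfg
  exact cofactor_pairing_nonneg hdf hdfg he htf htfg

lemma hessian_eq_zero_of_mixedHessDet_eq_zero (hf : ContDiff ℝ 2 f) (hg : ContDiff ℝ 2 g)
    (he : 0 < e) (hdf : hessDet f z = e) (hdfg : hessDet (fun z => f z + g z) z = e)
    (htf : 0 < pdx (pdx f) z + pdy (pdy f) z) (h0 : mixedHessDet f g z = 0) :
    pdx (pdx g) z = 0 ∧ pdy (pdx g) z = 0 ∧ pdy (pdy g) z = 0 := by
  obtain ⟨hxx, hxy, hyy⟩ := hessian_add hf hg z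
  rw [hessDet, hxx, hxy, hyy] at hdfg
  exact eq_zero_of_cofactor_pairing_eq_zero hdf hdfg he htf h0

end hessian

theorem monge_ampere_uniqueness_general (F : ℝ × ℝ → ℝ)
    (p q : ℝ × ℝ → ℝ)
    (hp : ContDiff ℝ 2 p) (hpper : Biperiodic p)
    (hq : ContDiff ℝ 2 q) (hqper : Biperiodic q)
    (P Q : ℝ × ℝ → ℝ)
    (hP : P = fun z : ℝ × ℝ => (z.1 ^ 2 + z.2 ^ 2) / 2 + p z)
    (hQ : Q = fun z : ℝ × ℝ => (z.1 ^ 2 + z.2 ^ 2) / 2 + q z)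
    (heqP : ∀ z : ℝ × ℝ,
      pdx (pdx P) z * pdy (pdy P) z - (pdy (pdx P) z) ^ 2 = Real.exp (F z))
    (hposP : ∀ z : ℝ × ℝ, 0 < pdx (pdx P) z + pdy (pdy P) z)
    (heqQ : ∀ z : ℝ × ℝ,
      pdx (pdx Q) z * pdy (pdy Q) z - (pdy (pdx Q) z) ^ 2 = Real.exp (F z))
    (hposQ : ∀ z : ℝ × ℝ, 0 < pdx (pdx Q) z + pdy (pdy Q) z) :
    ∃ k : ℝ, ∀ z : ℝ × ℝ, p z - q z = k := by
  set r : ℝ × ℝ → ℝ := fun z => q z - p z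
  have hr : ContDiff ℝ 2 r := hq.sub hp
  have hrper : Biperiodic r := hqper.sub hpper
  obtain rfl : Q = fun z => P z + r z := by
    rw [hQ, hP]
    ext z
    ring
  have hP2 : ContDiff ℝ 2 P := by
    rw [hP]
    fun_prop
  have hnonneg := fun z => mixedHessDet_nonneg hP2 hr (Real.exp_pos (F z)) (heqP z) (heqQ z)
    (hposP z) (hposQ z)
  have hzero : ∀ z, mixedHessDet P r z = 0 := by
    subst hP
    exact mixedHessDet_half_sq_add_eq_zero hp hpper hr hrper hnonneg
  have hHess := fun z => hessian_eq_zero_of_mixedHessDet_eq_zero hP2 hr (Real.exp_pos (F z))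
    (heqP z) (heqQ z) (hposP z) (hzero z)
  refine ⟨p 0 - q 0, fun z => ?_⟩
  have hconst := eq_of_hessian_eq_zero hr hrper (fun z => (hHess z).1) (fun z => (hHess z).2.1)
    (fun z => (hHess z).2.2) z 0
  simp only [r] at hconst
  linarith

/-- Uniqueness modulo constants for the Monge–Ampère equation
`P_uu P_vv - P_uv² = e^F`, `P = ½(u²+v²) + p`, with `p` biperiodic. -/
theorem monge_ampere_uniqueness (F : ℝ × ℝ → ℝ) (hF : Continuous F) (hFper : Biperiodic F)
    (p q : ℝ × ℝ → ℝ)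
    (hp : ContDiff ℝ 2 p) (hpper : Biperiodic p)
    (hq : ContDiff ℝ 2 q) (hqper : Biperiodic q)
    (P Q : ℝ × ℝ → ℝ)
    (hP : P = fun z : ℝ × ℝ => (z.1 ^ 2 + z.2 ^ 2) / 2 + p z)
    (hQ : Q = fun z : ℝ × ℝ => (z.1 ^ 2 + z.2 ^ 2) / 2 + q z)
    (heqP : ∀ z : ℝ × ℝ,
      pdx (pdx P) z * pdy (pdy P) z - (pdy (pdx P) z) ^ 2 = Real.exp (F z))
    (hposP : ∀ z : ℝ × ℝ, 0 < pdx (pdx P) z + pdy (pdy P) z)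
    (heqQ : ∀ z : ℝ × ℝ,
      pdx (pdx Q) z * pdy (pdy Q) z - (pdy (pdx Q) z) ^ 2 = Real.exp (F z))
    (hposQ : ∀ z : ℝ × ℝ, 0 < pdx (pdx Q) z + pdy (pdy Q) z) :
    ∃ k : ℝ, ∀ z : ℝ × ℝ, p z - q z = k :=
  monge_ampere_uniqueness_general F p q hp hpper hq hqper P Q hP hQ heqP hposP heqQ hposQ
end
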